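/- If Ψ : ℕ → (0,∞) satisfies Σ_{k=1}^∞ k³Ψ(k)² < ∞, then the set W*(Ψ) = {z ∈ ℂ : |z − p/q| < Ψ(⌊|q|⌋) for infinitely many ratios p/q of Gaussian integers p, q with q ≠ 0} has zero two-dimensional Lebesgue measure. -/

import Mathlib

open MeasureTheory

/-- `W*(Ψ)`: complex numbers `z` with `|z - p/q| < Ψ(⌊|q|⌋)` for infinitely many pairs of
Gaussian integers `p`, `q` with `q ≠ 0`. -/
def WstarPsi (Ψ : ℕ → ℝ) : Set ℂ :=
  {z | {pq : GaussianInt × GaussianInt | pq.2 ≠ 0 ∧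
    ‖z - (pq.1 : ℂ) / (pq.2 : ℂ)‖ < Ψ ⌊‖(pq.2 : ℂ)‖⌋₊}.Infinite}

/-!
Borel–Cantelli. Near a disk of radius `R`, the fractions `p/q` with `⌊|q|⌋ = n` have
`O(n)` choices of `q` (an annulus of width one) and `O(n²)` choices of `p` (a disk of radius
`O(n)`), so the points within `Ψ(n)` of one of them have measure `O(n³ Ψ(n)²)`, which is summable.
Gaussian integers are counted by packing: they are `1`-separated, so the balls of radius `1/2`
around them are disjoint.
-/

open Metric Set Filter Real

lemma ENNReal.ofReal_sq_mul_pi_le (r : ℝ) :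
    ENNReal.ofReal r ^ 2 * NNReal.pi ≤ ENNReal.ofReal (π * r ^ 2) := by
  rcases le_total 0 r with hr | hr
  · rw [← ENNReal.ofReal_pow hr, ← ENNReal.ofReal_coe_nnreal, NNReal.coe_real_pi,
      ← ENNReal.ofReal_mul (by positivity), mul_comm]
  · simp [ENNReal.ofReal_eq_zero.2 hr]

lemma Complex.volume_ball_le (c : ℂ) (r : ℝ) : volume (ball c r) ≤ ENNReal.ofReal (π * r ^ 2) :=
  (Complex.volume_ball c r).trans_le (ENNReal.ofReal_sq_mul_pi_le r)

lemma Complex.volume_closedBall_le (c : ℂ) (r : ℝ) :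
    volume (closedBall c r) ≤ ENNReal.ofReal (π * r ^ 2) :=
  (Complex.volume_closedBall c r).trans_le (ENNReal.ofReal_sq_mul_pi_le r)

lemma Complex.volume_ball_diff_ball (c : ℂ) {a b : ℝ} (hb : 0 ≤ b) (hba : b ≤ a) :
    volume (ball c a \ ball c b) = ENNReal.ofReal (π * (a ^ 2 - b ^ 2)) := by
  rw [measure_sdiff (ball_subset_ball hba) measurableSet_ball.nullMeasurableSet
      measure_ball_lt_top.ne, Complex.volume_ball, Complex.volume_ball,
    ← ENNReal.ofReal_pow (hb.trans hba), ← ENNReal.ofReal_pow hb, ← ENNReal.ofReal_coe_nnreal,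
    NNReal.coe_real_pi, ← ENNReal.ofReal_mul (by positivity), ← ENNReal.ofReal_mul (by positivity),
    ← ENNReal.ofReal_sub _ (by positivity), mul_sub, mul_comm π, mul_comm π]

namespace GaussianInt

lemma one_le_norm_toComplex {q : GaussianInt} (hq : q ≠ 0) : 1 ≤ ‖(q : ℂ)‖ := by
  have hnorm : (1 : ℝ) ≤ Complex.normSq (q : ℂ) := by
    rw [← intCast_real_norm]
    exact_mod_cast norm_pos.2 hq
  nlinarith [Complex.sq_norm (q : ℂ), _root_.norm_nonneg (q : ℂ)]

lemma one_le_floor_norm_toComplex {q : GaussianInt} (hq : q ≠ 0) : 1 ≤ ⌊‖(q : ℂ)‖⌋₊ :=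
  Nat.le_floor (by simpa using one_le_norm_toComplex hq)

lemma one_le_dist_toComplex {q q' : GaussianInt} (h : q ≠ q') : 1 ≤ dist (q : ℂ) q' := by
  rw [Complex.dist_eq, ← toComplex_sub]
  exact one_le_norm_toComplex (sub_ne_zero.2 h)

lemma card_mul_pi_div_four_le {s : Finset GaussianInt} {A : Set ℂ} {V : ℝ} (hV : 0 ≤ V)
    (hA : ∀ q ∈ s, ball (q : ℂ) 2⁻¹ ⊆ A) (hAV : volume A ≤ ENNReal.ofReal V) :
    (s.card : ℝ) * (π / 4) ≤ V := by
  have hdisj : (s : Set GaussianInt).PairwiseDisjoint fun q => ball (q : ℂ) 2⁻¹ :=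
    fun q _ q' _ hne => ball_disjoint_ball (by linarith [one_le_dist_toComplex hne])
  have hball (q : GaussianInt) : volume (ball (q : ℂ) 2⁻¹) = ENNReal.ofReal (π / 4) := by
    rw [Complex.volume_ball, ← ENNReal.ofReal_pow (by norm_num), ← ENNReal.ofReal_coe_nnreal,
      NNReal.coe_real_pi, ← ENNReal.ofReal_mul (by positivity)]
    ring_nf
  refine (ENNReal.ofReal_le_ofReal_iff hV).1 (le_trans ?_ hAV)
  calc ENNReal.ofReal (s.card * (π / 4))
      = ∑ q ∈ s, volume (ball (q : ℂ) 2⁻¹) := by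
        simp [hball, ENNReal.ofReal_mul, ENNReal.ofReal_natCast]
    _ = volume (⋃ q ∈ s, ball (q : ℂ) 2⁻¹) :=
        (measure_biUnion_finset hdisj fun _ _ => measurableSet_ball).symm
    _ ≤ volume A := measure_mono (iUnion₂_subset hA)

lemma card_le_of_forall_norm_le {s : Finset GaussianInt} {B : ℝ}
    (hs : ∀ q ∈ s, ‖(q : ℂ)‖ ≤ B) : (s.card : ℝ) ≤ (2 * B + 1) ^ 2 := by
  have hsub (q) (hq : q ∈ s) : ball (q : ℂ) 2⁻¹ ⊆ closedBall 0 (B + 2⁻¹) := fun z hz => by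
    rw [mem_closedBall_zero_iff]
    linarith [norm_le_norm_add_norm_sub' z (q : ℂ), mem_ball_iff_norm.1 hz, hs q hq]
  have := card_mul_pi_div_four_le (by positivity) hsub (Complex.volume_closedBall_le 0 _)
  nlinarith [pi_pos]

lemma finite_setOf_norm_le (B : ℝ) : {q : GaussianInt | ‖(q : ℂ)‖ ≤ B}.Finite := by
  by_contra h
  obtain ⟨t, ht, hcard⟩ := Set.Infinite.exists_subset_card_eq h (⌊(2 * B + 1) ^ 2⌋₊ + 1)
  have := card_le_of_forall_norm_le fun q hq => ht hq
  rw [hcard] at this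
  push_cast at this
  linarith [Nat.lt_floor_add_one ((2 * B + 1) ^ 2)]

lemma card_le_of_forall_mem_annulus {s : Finset GaussianInt} {a : ℝ} (ha : 2⁻¹ ≤ a)
    (hs : ∀ q ∈ s, a ≤ ‖(q : ℂ)‖ ∧ ‖(q : ℂ)‖ ≤ a + 1) : (s.card : ℝ) ≤ 16 * a + 8 := by
  have hsub (q) (hq : q ∈ s) : ball (q : ℂ) 2⁻¹ ⊆ ball 0 (a + 3 / 2) \ ball 0 (a - 2⁻¹) :=
    fun z hz => by
      have hzq := mem_ball_iff_norm.1 hz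
      rw [Set.mem_sdiff, mem_ball_zero_iff, mem_ball_zero_iff, not_lt]
      constructor <;> linarith [norm_le_norm_add_norm_sub' z (q : ℂ),
        norm_le_norm_add_norm_sub z (q : ℂ), norm_sub_rev z (q : ℂ), hs q hq]
  have := card_mul_pi_div_four_le (mul_nonneg pi_pos.le (by nlinarith)) hsub
    (Complex.volume_ball_diff_ball 0 (by linarith) (by linarith)).le
  nlinarith [pi_pos]

end GaussianInt

open GaussianInt

lemma Complex.norm_lt_mul_of_norm_sub_div_lt {z p q : ℂ} {R r : ℝ} (hq : q ≠ 0) (hz : ‖z‖ < R)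
    (hzpq : ‖z - p / q‖ < r) : ‖p‖ < ‖q‖ * (R + r) := by
  have hpq : ‖p‖ = ‖q‖ * ‖p / q‖ := by rw [norm_div, mul_div_cancel₀ _ (norm_ne_zero_iff.2 hq)]
  rw [hpq]
  exact mul_lt_mul_of_pos_left (by linarith [norm_le_norm_add_norm_sub z (p / q)])
    (norm_pos_iff.2 hq)

lemma le_sqrt_tsum_of_summable {Ψ : ℕ → ℝ} (hsum : Summable fun k : ℕ => (k : ℝ) ^ 3 * Ψ k ^ 2)
    {n : ℕ} (hn : 1 ≤ n) : Ψ n ≤ √(∑' k : ℕ, (k : ℝ) ^ 3 * Ψ k ^ 2) := by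
  refine le_sqrt_of_sq_le ?_
  calc Ψ n ^ 2 ≤ (n : ℝ) ^ 3 * Ψ n ^ 2 :=
        le_mul_of_one_le_left (sq_nonneg _) (one_le_pow₀ (by exact_mod_cast hn))
    _ ≤ ∑' k : ℕ, (k : ℝ) ^ 3 * Ψ k ^ 2 := hsum.le_tsum n fun k _ => by positivity

/-- With `M = R + sup_{n ≥ 1} Ψ(n)`, these pairs include all `(p, q)` with `⌊|q|⌋ = n` and `p/q`
within `Ψ(n)` of a point of modulus less than `R`. -/
def fractionPairs (M : ℝ) (n : ℕ) : Set (GaussianInt × GaussianInt) :=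
  {p : GaussianInt | ‖(p : ℂ)‖ ≤ (n + 1) * M} ×ˢ {q : GaussianInt | q ≠ 0 ∧ ⌊‖(q : ℂ)‖⌋₊ = n}

def fractionNbhd (Ψ : ℕ → ℝ) (M : ℝ) (n : ℕ) : Set ℂ :=
  ⋃ pq ∈ fractionPairs M n, ball ((pq.1 : ℂ) / pq.2) (Ψ n)

lemma finite_fractionPairs (M : ℝ) (n : ℕ) : (fractionPairs M n).Finite :=
  (finite_setOf_norm_le _).prod <| (finite_setOf_norm_le (n + 1)).subset fun q hq =>
    show ‖(q : ℂ)‖ ≤ n + 1 by rw [← hq.2]; exact (Nat.lt_floor_add_one _).le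

lemma card_le_of_subset_fractionPairs {M : ℝ} (hM : 0 ≤ M) {n : ℕ}
    {u : Finset (GaussianInt × GaussianInt)} (hu : ↑u ⊆ fractionPairs M n) :
    (u.card : ℝ) ≤ 24 * (4 * M + 1) ^ 2 * n ^ 3 := by
  classical
  rcases u.eq_empty_or_nonempty with rfl | ⟨⟨p₀, q₀⟩, h₀⟩
  · rw [Finset.card_empty, Nat.cast_zero]; positivity
  have hn : (1 : ℝ) ≤ n := by
    obtain ⟨-, hq₀, rfl⟩ := hu h₀
    exact_mod_cast one_le_floor_norm_toComplex hq₀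
  have hp : ((u.image Prod.fst).card : ℝ) ≤ (2 * ((n + 1) * M) + 1) ^ 2 :=
    card_le_of_forall_norm_le <| by
      simp only [Finset.mem_image]
      rintro _ ⟨pq, hpq, rfl⟩
      exact (hu hpq).1
  have hq : ((u.image Prod.snd).card : ℝ) ≤ 16 * n + 8 :=
    card_le_of_forall_mem_annulus (by linarith) <| by
      simp only [Finset.mem_image]
      rintro _ ⟨pq, hpq, rfl⟩
      obtain ⟨-, -, hfloor⟩ := hu hpq
      exact ⟨hfloor ▸ Nat.floor_le (norm_nonneg _), hfloor ▸ (Nat.lt_floor_add_one _).le⟩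
  have hprod : (u.card : ℝ) ≤ (u.image Prod.fst).card * (u.image Prod.snd).card := by
    exact_mod_cast (Finset.card_le_card Finset.subset_product).trans_eq (Finset.card_product _ _)
  have hp' : (2 * ((n + 1) * M) + 1) ^ 2 ≤ (n : ℝ) ^ 2 * (4 * M + 1) ^ 2 := by
    rw [← mul_pow]
    exact pow_le_pow_left₀ (by positivity) (by nlinarith) 2
  calc (u.card : ℝ) ≤ (n ^ 2 * (4 * M + 1) ^ 2) * (24 * n) :=
        hprod.trans (mul_le_mul (hp.trans hp') (by linarith) (by positivity) (by positivity))
    _ = 24 * (4 * M + 1) ^ 2 * n ^ 3 := by ring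

lemma volume_fractionNbhd_le (Ψ : ℕ → ℝ) {M : ℝ} (hM : 0 ≤ M) (n : ℕ) :
    volume (fractionNbhd Ψ M n) ≤
      ENNReal.ofReal (24 * π * (4 * M + 1) ^ 2 * ((n : ℝ) ^ 3 * Ψ n ^ 2)) := by
  set u := (finite_fractionPairs M n).toFinset
  have hcard := card_le_of_subset_fractionPairs hM (Set.Finite.coe_toFinset _).le (u := u)
  calc volume (fractionNbhd Ψ M n) = volume (⋃ pq ∈ u, ball ((pq.1 : ℂ) / pq.2) (Ψ n)) := by
        rw [fractionNbhd, ← Finset.set_biUnion_coe, Set.Finite.coe_toFinset]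
    _ ≤ ∑ pq ∈ u, volume (ball ((pq.1 : ℂ) / pq.2) (Ψ n)) := measure_biUnion_finset_le _ _
    _ ≤ ∑ _pq ∈ u, ENNReal.ofReal (π * Ψ n ^ 2) :=
        Finset.sum_le_sum fun _ _ => Complex.volume_ball_le _ _
    _ = ENNReal.ofReal (u.card * (π * Ψ n ^ 2)) := by
        rw [Finset.sum_const, nsmul_eq_mul, ENNReal.ofReal_mul (Nat.cast_nonneg _),
          ENNReal.ofReal_natCast]
    _ ≤ _ := ENNReal.ofReal_le_ofReal <| by
        nlinarith [mul_le_mul_of_nonneg_right hcard (by positivity : 0 ≤ π * Ψ n ^ 2)]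

lemma volume_setOf_frequently_mem_fractionNbhd {Ψ : ℕ → ℝ}
    (hsum : Summable fun k : ℕ => (k : ℝ) ^ 3 * Ψ k ^ 2) {M : ℝ} (hM : 0 ≤ M) :
    volume {z | ∃ᶠ n in atTop, z ∈ fractionNbhd Ψ M n} = 0 := by
  refine measure_setOfPred_frequently_eq_zero <|
    ne_top_of_le_ne_top ?_ (ENNReal.tsum_le_tsum (volume_fractionNbhd_le Ψ hM))
  rw [← ENNReal.ofReal_tsum_of_nonneg (fun n => by positivity) (hsum.mul_left _)]
  exact ENNReal.ofReal_ne_top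

lemma WstarPsi_inter_ball_subset {Ψ : ℕ → ℝ} {D : ℝ} (hD : ∀ n, 1 ≤ n → Ψ n ≤ D) (R : ℝ) :
    WstarPsi Ψ ∩ ball 0 R ⊆ {z | ∃ᶠ n in atTop, z ∈ fractionNbhd Ψ (R + D) n} := by
  rintro z ⟨hz, hzR⟩
  rw [mem_ofPred_eq, Nat.frequently_atTop_iff_infinite]
  refine fun hfin => hz <| (hfin.biUnion fun n _ => finite_fractionPairs (R + D) n).subset ?_
  rintro ⟨p, q⟩ ⟨hq, hzpq⟩
  dsimp only at hq hzpq
  set n := ⌊‖(q : ℂ)‖⌋₊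
  have hp := Complex.norm_lt_mul_of_norm_sub_div_lt (toComplex_eq_zero.not.2 hq)
    (mem_ball_zero_iff.1 hzR) hzpq
  have hmem : (p, q) ∈ fractionPairs (R + D) n := by
    refine ⟨hp.le.trans (mul_le_mul (Nat.lt_floor_add_one _).le ?_ ?_ (by positivity)), hq, rfl⟩
    · linarith [hD n (one_le_floor_norm_toComplex hq)]
    · linarith [norm_nonneg (z - p / q), norm_nonneg z, mem_ball_zero_iff.1 hzR]
  exact mem_biUnion (x := n) (mem_biUnion hmem (mem_ball_iff_norm.2 hzpq)) hmem

theorem stmt16_general (Ψ : ℕ → ℝ)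
    (hsum : Summable fun k : ℕ => (k : ℝ) ^ 3 * Ψ k ^ 2) :
    volume (WstarPsi Ψ) = 0 := by
  set D := √(∑' k : ℕ, (k : ℝ) ^ 3 * Ψ k ^ 2)
  have hD : ∀ n, 1 ≤ n → Ψ n ≤ D := fun n hn => le_sqrt_tsum_of_summable hsum hn
  have hW : WstarPsi Ψ ⊆ ⋃ R : ℕ, WstarPsi Ψ ∩ ball 0 R := fun z hz =>
    mem_iUnion.2 ⟨⌊‖z‖⌋₊ + 1, hz, by simpa using Nat.lt_floor_add_one ‖z‖⟩
  exact measure_mono_null hW <| measure_iUnion_null fun R =>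
    measure_mono_null (WstarPsi_inter_ball_subset hD R)
      (volume_setOf_frequently_mem_fractionNbhd hsum (by positivity))

/-- If `∑ k³ Ψ(k)² < ∞`, then `W*(Ψ)` has zero planar Lebesgue measure. -/
theorem stmt16 (Ψ : ℕ → ℝ) (hΨpos : ∀ k : ℕ, 0 < Ψ k)
    (hsum : Summable fun k : ℕ => (k : ℝ) ^ 3 * Ψ k ^ 2) :
    volume (WstarPsi Ψ) = 0 :=
  stmt16_general Ψ hsum
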